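/- Let dμ be a measure on ℝ with compact infinite support, and let x₀ be an isolated point of supp(dμ). Then there exists d₀ > 0 such that, setting δ_n = d₀²/(d₀ + √2·a_{n+1}), for every n at least one of the orthonormal polynomials p_n, p_{n+1} has at most one zero in (x₀ − δ_n, x₀ + δ_n). -/

import Mathlib

open MeasureTheory Polynomial

def measSupport (μ : Measure ℝ) : Set ℝ :=
  {x | ∀ ε > 0, 0 < μ (Metric.ball x ε)}

/-!
Let `K(z, t) = ∑_{k ≤ n} p_k(z) p_k(t)`. By the Christoffel–Darboux formula, at a zero `z` of
`p_n` or of `p_{n+1}` the polynomial `K(z, ·)` is an approximate eigenvector of multiplication by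
`t`: `(t - z) K(z, t)` is a multiple of `p_n` or `p_{n+1}` of norm `a_{n+1} |p_{n±1}(z)|`. Kernels
at two distinct zeros of the same `p_j` are orthogonal to each other and to each other's residuals.
Since `x₀` is isolated in the support, at distance `G` from the rest of it, `‖(t - x₀) u‖ ≥ G ‖u‖`
in `L²(μ)` whenever `u(x₀) = 0`; applied to the combination of the two kernels vanishing at `x₀`,
this forces `(G² - δ²) / 2 · K(z, z) ≤ a_{n+1}² p_{n±1}(z)²` at one of the two zeros. Doing this
at a zero `x` of `p_n` and a zero `y` of `p_{n+1}`, Cauchy–Schwarz for `K(x, y)` and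
`(x - y) K(x, y) = a_{n+1} p_{n+1}(x) p_n(y)` give `G² ≤ δ² + 4 a_{n+1} δ`, false for `d₀ = G / 4`.
-/

open Finset
open LinearMap (BilinForm)

section ApproximateEigenvectors

variable {M : Type*} [AddCommGroup M] [Module ℝ M]

theorem le_residual_or_le_residual (B : BilinForm ℝ M) (hB : B.IsSymm)
    (hpos : ∀ u, 0 ≤ B u u) (T : M →ₗ[ℝ] M) (φ : M →ₗ[ℝ] ℝ) {G δ : ℝ}
    (hgap : ∀ u, φ u = 0 → G ^ 2 * B u u ≤ B (T u) (T u))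
    {f₁ f₂ r₁ r₂ : M} {s₁ s₂ : ℝ} (hs₁ : |s₁| ≤ δ) (hs₂ : |s₂| ≤ δ)
    (hT₁ : T f₁ = s₁ • f₁ + r₁) (hT₂ : T f₂ = s₂ • f₂ + r₂) (hf : B f₁ f₂ = 0)
    (hr : ∀ f ∈ ({f₁, f₂} : Set M), ∀ r ∈ ({r₁, r₂} : Set M), B f r = 0) :
    (G ^ 2 - δ ^ 2) / 2 * B f₁ f₁ ≤ B r₁ r₁ ∨ (G ^ 2 - δ ^ 2) / 2 * B f₂ f₂ ≤ B r₂ r₂ := by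
  by_contra! h
  obtain ⟨α, β, hαβ, hφ⟩ : ∃ α β : ℝ, (α ≠ 0 ∨ β ≠ 0) ∧ α * φ f₁ + β * φ f₂ = 0 := by
    rcases eq_or_ne (φ f₂) 0 with h₂ | h₂
    · exact ⟨0, 1, Or.inr one_ne_zero, by simp [h₂]⟩
    · exact ⟨φ f₂, -φ f₁, Or.inl h₂, by ring⟩
  have h₁₁ := hr f₁ (by simp) r₁ (by simp)
  have h₁₂ := hr f₁ (by simp) r₂ (by simp)
  have h₂₁ := hr f₂ (by simp) r₁ (by simp)
  have h₂₂ := hr f₂ (by simp) r₂ (by simp)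
  have hu := hgap (α • f₁ + β • f₂) (by simpa using hφ)
  have hR := hpos (α • r₁ - β • r₂)
  simp only [map_add, map_sub, map_smul, hT₁, hT₂, LinearMap.add_apply, LinearMap.sub_apply,
    LinearMap.smul_apply, smul_eq_mul, hB.eq f₂ f₁, hB.eq r₁ f₁, hB.eq r₁ f₂, hB.eq r₂ f₁,
    hB.eq r₂ f₂, hB.eq r₂ r₁, hf, h₁₁, h₁₂, h₂₁, h₂₂, mul_zero, add_zero, zero_add] at hu hR
  have hs₁' : s₁ ^ 2 ≤ δ ^ 2 := sq_le_sq' (abs_le.1 hs₁).1 (abs_le.1 hs₁).2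
  have hs₂' : s₂ ^ 2 ≤ δ ^ 2 := sq_le_sq' (abs_le.1 hs₂).1 (abs_le.1 hs₂).2
  have k₁ := mul_le_mul_of_nonneg_left hs₁' (mul_nonneg (sq_nonneg α) (hpos f₁))
  have k₂ := mul_le_mul_of_nonneg_left hs₂' (mul_nonneg (sq_nonneg β) (hpos f₂))
  rcases hαβ with hα | hβ
  · have := mul_lt_mul_of_pos_left h.1 (sq_pos_of_ne_zero hα)
    have := mul_le_mul_of_nonneg_left h.2.le (sq_nonneg β)
    linarith
  · have := mul_le_mul_of_nonneg_left h.1.le (sq_nonneg α)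
    have := mul_lt_mul_of_pos_left h.2 (sq_pos_of_ne_zero hβ)
    linarith

end ApproximateEigenvectors

section PolyInner

variable {μ : Measure ℝ}

theorem integrable_eval_of_integrable_abs_pow
    (hmom : ∀ n : ℕ, Integrable (fun x : ℝ => |x| ^ n) μ) (P : ℝ[X]) :
    Integrable (fun x => P.eval x) μ := by
  simp_rw [eval_eq_sum_range]
  refine integrable_finsetSum _ fun i _ => Integrable.const_mul ?_ _
  refine (hmom i).mono (continuous_pow i).aestronglyMeasurable (ae_of_all _ fun x => ?_)
  simp

theorem ae_mem_measSupport : ∀ᵐ x ∂μ, x ∈ measSupport μ := by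
  refine measure_null_of_locally_null _ fun x hx => ?_
  simp only [measSupport, Set.mem_compl_iff, Set.mem_ofPred_eq, not_forall, not_lt,
    nonpos_iff_eq_zero] at hx
  obtain ⟨ε, hε, hεz⟩ := hx
  exact ⟨Metric.ball x ε, mem_nhdsWithin_of_mem_nhds (Metric.ball_mem_nhds x hε), hεz⟩

theorem integrable_eval_mul_eval (hint : ∀ P : ℝ[X], Integrable (fun x => P.eval x) μ)
    (P Q : ℝ[X]) : Integrable (fun x => P.eval x * Q.eval x) μ := by
  simpa using hint (P * Q)

noncomputable def polyInner (μ : Measure ℝ)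
    (hint : ∀ P : ℝ[X], Integrable (fun x => P.eval x) μ) : BilinForm ℝ ℝ[X] :=
  LinearMap.mk₂ ℝ (fun P Q => ∫ x, P.eval x * Q.eval x ∂μ)
    (fun P Q R => by
      simp only [eval_add, add_mul]
      exact integral_add (integrable_eval_mul_eval hint P R) (integrable_eval_mul_eval hint Q R))
    (fun c P Q => by
      simp only [eval_smul, smul_eq_mul, mul_assoc]
      exact integral_const_mul _ _)
    (fun P Q R => by
      simp only [eval_add, mul_add]
      exact integral_add (integrable_eval_mul_eval hint P Q) (integrable_eval_mul_eval hint P R))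
    (fun c P Q => by
      simp only [eval_smul, smul_eq_mul, mul_left_comm _ c]
      exact integral_const_mul _ _)

variable {hint : ∀ P : ℝ[X], Integrable (fun x => P.eval x) μ}

theorem polyInner_apply (P Q : ℝ[X]) :
    polyInner μ hint P Q = ∫ x, P.eval x * Q.eval x ∂μ := rfl

theorem polyInner_isSymm : (polyInner μ hint).IsSymm :=
  ⟨fun P Q => by simp only [polyInner_apply, mul_comm]⟩

theorem polyInner_self_nonneg (P : ℝ[X]) : 0 ≤ polyInner μ hint P P :=
  integral_nonneg fun _ => mul_self_nonneg _

theorem sq_mul_polyInner_le_of_eval_eq_zero {x₀ G : ℝ} (hG : 0 ≤ G)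
    (hgap : ∀ t ∈ measSupport μ, t ≠ x₀ → G ≤ |t - x₀|) {U : ℝ[X]} (hU : U.eval x₀ = 0) :
    G ^ 2 * polyInner μ hint U U ≤ polyInner μ hint ((X - C x₀) * U) ((X - C x₀) * U) := by
  simp only [polyInner_apply, ← integral_const_mul]
  refine integral_mono_ae ((integrable_eval_mul_eval hint U U).const_mul _)
    (integrable_eval_mul_eval hint _ _) ?_
  filter_upwards [ae_mem_measSupport] with t ht
  rcases eq_or_ne t x₀ with rfl | hne
  · simp [hU]
  · have : G ^ 2 ≤ (t - x₀) ^ 2 := by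
      simpa only [sq_abs] using pow_le_pow_left₀ hG (hgap t ht hne) 2
    simp only [eval_mul, eval_sub, eval_X, eval_C]
    nlinarith [mul_self_nonneg (U.eval t)]

end PolyInner

def PolyOrthonormal (μ : Measure ℝ) (p : ℕ → ℝ[X]) : Prop :=
  ∀ k m, ∫ x, (p k).eval x * (p m).eval x ∂μ = if k = m then 1 else 0

def JacobiRecurrence (p : ℕ → ℝ[X]) (a b : ℕ → ℝ) : Prop :=
  ∀ k x, x * (p k).eval x
    = a (k + 1) * (p (k + 1)).eval x + b (k + 1) * (p k).eval x
      + (if k = 0 then 0 else a k * (p (k - 1)).eval x)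

noncomputable def reproducingKernel (p : ℕ → ℝ[X]) (n : ℕ) (z : ℝ) : ℝ[X] :=
  ∑ k ∈ range (n + 1), (p k).eval z • p k

section Kernel

variable {μ : Measure ℝ} {hint : ∀ P : ℝ[X], Integrable (fun x => P.eval x) μ}
  {p : ℕ → ℝ[X]} {a b : ℕ → ℝ}

theorem eval_reproducingKernel (n : ℕ) (z t : ℝ) :
    (reproducingKernel p n z).eval t = ∑ k ∈ range (n + 1), (p k).eval z * (p k).eval t := by
  simp [reproducingKernel, eval_finsetSum]

theorem PolyOrthonormal.polyInner_eq (horth : PolyOrthonormal μ p) (k m : ℕ) :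
    polyInner μ hint (p k) (p m) = if k = m then 1 else 0 :=
  horth k m

theorem polyInner_sum_smul_left (horth : PolyOrthonormal μ p) (s : Finset ℕ) (c : ℕ → ℝ)
    (m : ℕ) : polyInner μ hint (∑ k ∈ s, c k • p k) (p m) = if m ∈ s then c m else 0 := by
  simp [map_sum, horth.polyInner_eq]

theorem polyInner_reproducingKernel (horth : PolyOrthonormal μ p) (n : ℕ) (z : ℝ) (m : ℕ) :
    polyInner μ hint (reproducingKernel p n z) (p m) = if m ≤ n then (p m).eval z else 0 := by
  simp only [reproducingKernel, polyInner_sum_smul_left horth, mem_range, Nat.lt_succ_iff]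

theorem polyInner_reproducingKernel_reproducingKernel (horth : PolyOrthonormal μ p) (n : ℕ)
    (z w : ℝ) :
    polyInner μ hint (reproducingKernel p n z) (reproducingKernel p n w)
      = (reproducingKernel p n z).eval w := by
  rw [show reproducingKernel p n w = ∑ k ∈ range (n + 1), (p k).eval w • p k from rfl,
    map_sum, eval_reproducingKernel]
  refine sum_congr rfl fun k hk => ?_
  rw [map_smul, polyInner_reproducingKernel horth, if_pos (Nat.lt_succ_iff.1 (mem_range.1 hk)),
    smul_eq_mul, mul_comm]

theorem christoffel_darboux (hrec : JacobiRecurrence p a b) (n : ℕ) (x y : ℝ) :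
    (x - y) * (reproducingKernel p n x).eval y
      = a (n + 1) * ((p (n + 1)).eval x * (p n).eval y - (p n).eval x * (p (n + 1)).eval y) := by
  induction n with
  | zero =>
    have hx := hrec 0 x
    have hy := hrec 0 y
    simp only [if_pos] at hx hy
    simp only [eval_reproducingKernel, zero_add, sum_range_one]
    linear_combination (p 0).eval y * hx - (p 0).eval x * hy
  | succ n ih =>
    have hx := hrec (n + 1) x
    have hy := hrec (n + 1) y
    simp only [Nat.add_one_ne_zero, if_false, Nat.add_sub_cancel] at hx hy
    rw [eval_reproducingKernel] at ih ⊢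
    rw [sum_range_succ]
    linear_combination ih + (p (n + 1)).eval y * hx - (p (n + 1)).eval x * hy

theorem eval_reproducingKernel_self_nonneg (n : ℕ) (z : ℝ) :
    0 ≤ (reproducingKernel p n z).eval z := by
  rw [eval_reproducingKernel]
  exact sum_nonneg fun k _ => mul_self_nonneg _

theorem eval_reproducingKernel_sq_le (n : ℕ) (x y : ℝ) :
    (reproducingKernel p n x).eval y ^ 2
      ≤ (reproducingKernel p n x).eval x * (reproducingKernel p n y).eval y := by
  simpa only [eval_reproducingKernel, sq] using
    sum_mul_sq_le_sq_mul_sq (range (n + 1)) (fun k => (p k).eval x) (fun k => (p k).eval y)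

theorem X_sub_C_mul_reproducingKernel (hrec : JacobiRecurrence p a b) (n : ℕ) (z : ℝ) :
    (X - C z) * reproducingKernel p n z
      = a (n + 1) • ((p n).eval z • p (n + 1) - (p (n + 1)).eval z • p n) := by
  refine Polynomial.funext fun t => ?_
  simp only [eval_mul, eval_sub, eval_X, eval_C, eval_smul, smul_eq_mul]
  linear_combination -christoffel_darboux hrec n z t

theorem polyInner_reproducingKernel_X_sub_C_mul (horth : PolyOrthonormal μ p)
    (hrec : JacobiRecurrence p a b) (n : ℕ) (w z : ℝ) :
    polyInner μ hint (reproducingKernel p n w) ((X - C z) * reproducingKernel p n z)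
      = -(a (n + 1) * ((p (n + 1)).eval z * (p n).eval w)) := by
  simp [X_sub_C_mul_reproducingKernel hrec, polyInner_reproducingKernel horth]

theorem polyInner_X_sub_C_mul_reproducingKernel_self (horth : PolyOrthonormal μ p)
    (hrec : JacobiRecurrence p a b) (n : ℕ) (z : ℝ) :
    polyInner μ hint ((X - C z) * reproducingKernel p n z) ((X - C z) * reproducingKernel p n z)
      = a (n + 1) ^ 2 * ((p n).eval z ^ 2 + (p (n + 1)).eval z ^ 2) := by
  simp [X_sub_C_mul_reproducingKernel hrec, horth.polyInner_eq]
  ring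

theorem eval_succ_ne_zero_of_eval_eq_zero (hp₀ : ∀ x, (p 0).eval x ≠ 0) (ha : ∀ k, a k ≠ 0)
    (hrec : JacobiRecurrence p a b) {k : ℕ} {x : ℝ} (hk : (p k).eval x = 0) :
    (p (k + 1)).eval x ≠ 0 := by
  induction k with
  | zero => exact absurd hk (hp₀ x)
  | succ k ih =>
    intro hk'
    have h := hrec (k + 1) x
    simp only [Nat.add_one_ne_zero, if_false, Nat.add_sub_cancel, hk, hk', mul_zero,
      zero_add, zero_eq_mul] at h
    exact ih (h.resolve_left (ha (k + 1))) hk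

theorem sq_mul_eval_mul_eval_le (hrec : JacobiRecurrence p a b) {n : ℕ} {x : ℝ}
    (hx₀ : (p n).eval x = 0) (y : ℝ) :
    (a (n + 1) * ((p (n + 1)).eval x * (p n).eval y)) ^ 2
      ≤ (x - y) ^ 2 * ((reproducingKernel p n x).eval x * (reproducingKernel p n y).eval y) := by
  have hCD := christoffel_darboux hrec n x y
  rw [hx₀, zero_mul, sub_zero] at hCD
  rw [← hCD, mul_pow]
  exact mul_le_mul_of_nonneg_left (eval_reproducingKernel_sq_le n x y) (sq_nonneg _)

theorem sq_le_sq_add_of_zeros (hrec : JacobiRecurrence p a b)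
    (hp₀ : ∀ x, (p 0).eval x ≠ 0) (ha : ∀ k, 0 < a k) {x₀ G δ x y : ℝ} {n : ℕ}
    (hx : x ∈ Set.Ioo (x₀ - δ) (x₀ + δ)) (hy : y ∈ Set.Ioo (x₀ - δ) (x₀ + δ))
    (hx₀ : (p n).eval x = 0) (hy₀ : (p (n + 1)).eval y = 0)
    (hxK : (G ^ 2 - δ ^ 2) / 2 * (reproducingKernel p n x).eval x
        ≤ a (n + 1) ^ 2 * ((p n).eval x ^ 2 + (p (n + 1)).eval x ^ 2))
    (hyK : (G ^ 2 - δ ^ 2) / 2 * (reproducingKernel p n y).eval y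
        ≤ a (n + 1) ^ 2 * ((p n).eval y ^ 2 + (p (n + 1)).eval y ^ 2)) :
    G ^ 2 ≤ δ ^ 2 + 4 * a (n + 1) * δ := by
  have hδ : 0 < δ := by linarith [hx.1, hx.2]
  have han := ha (n + 1)
  rcases le_or_gt ((G ^ 2 - δ ^ 2) / 2) 0 with hc | hc
  · nlinarith
  have hP : (p (n + 1)).eval x ≠ 0 :=
    eval_succ_ne_zero_of_eval_eq_zero hp₀ (fun k => (ha k).ne') hrec hx₀
  have hQ : (p n).eval y ≠ 0 := fun hQ =>
    eval_succ_ne_zero_of_eval_eq_zero hp₀ (fun k => (ha k).ne') hrec hQ hy₀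
  have hxy : (x - y) ^ 2 ≤ (2 * δ) ^ 2 := by
    refine sq_le_sq' ?_ ?_ <;> linarith [hx.1, hx.2, hy.1, hy.2]
  have hCS := sq_mul_eval_mul_eval_le hrec hx₀ y
  have hKx := eval_reproducingKernel_self_nonneg (p := p) n x
  have hKy := eval_reproducingKernel_self_nonneg (p := p) n y
  rw [hx₀, zero_pow two_ne_zero, zero_add] at hxK
  rw [hy₀, zero_pow two_ne_zero, add_zero] at hyK
  generalize hc_def : (G ^ 2 - δ ^ 2) / 2 = c at hc hxK hyK
  generalize (p (n + 1)).eval x = P at *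
  generalize (p n).eval y = Q at *
  generalize (reproducingKernel p n x).eval x = Kxx at *
  generalize (reproducingKernel p n y).eval y = Kyy at *
  have key : c ^ 2 * (a (n + 1) * (P * Q)) ^ 2
      ≤ (2 * δ * a (n + 1)) ^ 2 * (a (n + 1) * (P * Q)) ^ 2 :=
    calc c ^ 2 * (a (n + 1) * (P * Q)) ^ 2
        ≤ c ^ 2 * ((x - y) ^ 2 * (Kxx * Kyy)) := by gcongr
      _ = (x - y) ^ 2 * ((c * Kxx) * (c * Kyy)) := by ring
      _ ≤ (2 * δ) ^ 2 * ((a (n + 1) ^ 2 * P ^ 2) * (a (n + 1) ^ 2 * Q ^ 2)) := by gcongr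
      _ = (2 * δ * a (n + 1)) ^ 2 * (a (n + 1) * (P * Q)) ^ 2 := by ring
  have hc' : c ≤ 2 * δ * a (n + 1) :=
    (pow_le_pow_iff_left₀ hc.le (by positivity) two_ne_zero).1
      (le_of_mul_le_mul_right key (by positivity))
  linarith

end Kernel

theorem exists_zero_half_mul_reproducingKernel_le {μ : Measure ℝ}
    (hint : ∀ P : ℝ[X], Integrable (fun x => P.eval x) μ) {p : ℕ → ℝ[X]} {a b : ℕ → ℝ}
    (horth : PolyOrthonormal μ p)
    (hrec : JacobiRecurrence p a b) {x₀ G δ : ℝ} (hG : 0 ≤ G)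
    (hgap : ∀ t ∈ measSupport μ, t ≠ x₀ → G ≤ |t - x₀|) {n j : ℕ} (hj : j = n ∨ j = n + 1)
    (hZ : ¬{x ∈ Set.Ioo (x₀ - δ) (x₀ + δ) | (p j).eval x = 0}.Subsingleton) :
    ∃ z ∈ Set.Ioo (x₀ - δ) (x₀ + δ), (p j).eval z = 0 ∧
      (G ^ 2 - δ ^ 2) / 2 * (reproducingKernel p n z).eval z
        ≤ a (n + 1) ^ 2 * ((p n).eval z ^ 2 + (p (n + 1)).eval z ^ 2) := by
  simp only [Set.Subsingleton, not_forall] at hZ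
  obtain ⟨z₁, ⟨hz₁, h₁⟩, z₂, ⟨hz₂, h₂⟩, hne⟩ := hZ
  have hcross : ∀ z ∈ ({z₁, z₂} : Set ℝ), ∀ w ∈ ({z₁, z₂} : Set ℝ),
      (p (n + 1)).eval z * (p n).eval w = 0 := by
    rintro z (rfl | rfl) w (rfl | rfl) <;> rcases hj with rfl | rfl <;> simp [h₁, h₂]
  have hKK : polyInner μ hint (reproducingKernel p n z₁) (reproducingKernel p n z₂) = 0 := by
    have hcd := christoffel_darboux hrec n z₁ z₂
    rw [hcross z₁ (by simp) z₂ (by simp), mul_comm ((p n).eval z₁),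
      hcross z₂ (by simp) z₁ (by simp), sub_zero, mul_zero] at hcd
    rw [polyInner_reproducingKernel_reproducingKernel horth]
    exact (mul_eq_zero.1 hcd).resolve_left (sub_ne_zero.2 hne)
  have hKr : ∀ f ∈ ({reproducingKernel p n z₁, reproducingKernel p n z₂} : Set ℝ[X]),
      ∀ r ∈ ({(X - C z₁) * reproducingKernel p n z₁, (X - C z₂) * reproducingKernel p n z₂} :
        Set ℝ[X]), polyInner μ hint f r = 0 := by
    simp only [Set.mem_insert_iff, Set.mem_singleton_iff]
    rintro f (rfl | rfl) r (rfl | rfl) <;>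
      rw [polyInner_reproducingKernel_X_sub_C_mul horth hrec, hcross _ (by simp) _ (by simp),
        mul_zero, neg_zero]
  have hT (z : ℝ) : (X - C x₀) * reproducingKernel p n z
      = (z - x₀) • reproducingKernel p n z + (X - C z) * reproducingKernel p n z := by
    rw [smul_eq_C_mul, C_sub]; ring
  have hs {z : ℝ} (hz : z ∈ Set.Ioo (x₀ - δ) (x₀ + δ)) : |z - x₀| ≤ δ :=
    (abs_sub_lt_iff.2 ⟨by linarith [hz.2], by linarith [hz.1]⟩).le
  rcases le_residual_or_le_residual (polyInner μ hint) polyInner_isSymm polyInner_self_nonneg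
      (LinearMap.mulLeft ℝ (X - C x₀)) (leval x₀)
      (fun U hU => sq_mul_polyInner_le_of_eval_eq_zero hG hgap hU) (hs hz₁) (hs hz₂)
      (hT z₁) (hT z₂) hKK hKr with h | h
  · refine ⟨z₁, hz₁, h₁, ?_⟩
    rwa [polyInner_reproducingKernel_reproducingKernel horth,
      polyInner_X_sub_C_mul_reproducingKernel_self horth hrec] at h
  · refine ⟨z₂, hz₂, h₂, ?_⟩
    rwa [polyInner_reproducingKernel_reproducingKernel horth,
      polyInner_X_sub_C_mul_reproducingKernel_self horth hrec] at h

theorem eval_ne_zero_of_natDegree_eq_zero {P : ℝ[X]} (h : P.natDegree = 0) (hP : P ≠ 0)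
    (x : ℝ) : P.eval x ≠ 0 := by
  obtain ⟨c, rfl⟩ := natDegree_eq_zero.1 h
  simpa using hP

theorem le_abs_sub_of_inter_ball_eq_singleton {s : Set ℝ} {x₀ ε : ℝ}
    (h : s ∩ Metric.ball x₀ ε = {x₀}) {t : ℝ} (ht : t ∈ s) (hne : t ≠ x₀) : ε ≤ |t - x₀| := by
  by_contra! hlt
  exact hne (h.subset ⟨ht, by rwa [Metric.mem_ball, Real.dist_eq]⟩)

theorem sq_add_four_mul_lt {d a δ : ℝ} (hd : 0 < d) (ha : 0 < a)
    (hδ : δ = d ^ 2 / (d + Real.sqrt 2 * a)) : δ ^ 2 + 4 * a * δ < 5 * d ^ 2 := by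
  have hsa : a ≤ Real.sqrt 2 * a := le_mul_of_one_le_left ha.le Real.one_lt_sqrt_two.le
  have hδd : δ * (d + Real.sqrt 2 * a) = d ^ 2 := by rw [hδ]; field_simp
  have hδ₀ : 0 < δ := by rw [hδ]; positivity
  have hδlt : δ < d := by nlinarith
  have haδ : a * δ < d ^ 2 := by nlinarith
  nlinarith

theorem stmt_12_general (μ : Measure ℝ)
    (hmom : ∀ n : ℕ, Integrable (fun x : ℝ => |x| ^ n) μ)
    (p : ℕ → Polynomial ℝ) (a b : ℕ → ℝ)
    (ha : ∀ k, 0 < a k)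
    (hdeg : ∀ k, (p k).natDegree = k)
    (hlead : ∀ k, 0 < (p k).leadingCoeff)
    (horth : ∀ k m, ∫ x, (p k).eval x * (p m).eval x ∂μ = if k = m then 1 else 0)
    (hrec : ∀ k x, x * (p k).eval x
      = a (k + 1) * (p (k + 1)).eval x + b (k + 1) * (p k).eval x
        + (if k = 0 then 0 else a k * (p (k - 1)).eval x))
    (x₀ : ℝ)
    (hiso : ∃ ε > 0, measSupport μ ∩ Metric.ball x₀ ε = {x₀}) :
    ∃ d₀ > (0 : ℝ), ∀ n : ℕ,
      ∀ δ : ℝ, δ = d₀ ^ 2 / (d₀ + Real.sqrt 2 * a (n + 1)) →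
      ({x ∈ Set.Ioo (x₀ - δ) (x₀ + δ) | (p n).eval x = 0}.Subsingleton ∨
       {x ∈ Set.Ioo (x₀ - δ) (x₀ + δ) | (p (n + 1)).eval x = 0}.Subsingleton) := by
  obtain ⟨G, hG, hball⟩ := hiso
  have hint := integrable_eval_of_integrable_abs_pow hmom
  have hgap (t : ℝ) (ht : t ∈ measSupport μ) (hne : t ≠ x₀) : G ≤ |t - x₀| :=
    le_abs_sub_of_inter_ball_eq_singleton hball ht hne
  have hp₀ := eval_ne_zero_of_natDegree_eq_zero (hdeg 0) (leadingCoeff_ne_zero.1 (hlead 0).ne')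
  refine ⟨G / 4, by positivity, fun n δ hδ => ?_⟩
  by_contra h
  rw [not_or] at h
  obtain ⟨x, hx, hx₀, hxK⟩ := exists_zero_half_mul_reproducingKernel_le hint
    horth hrec hG.le hgap (Or.inl rfl) h.1
  obtain ⟨y, hy, hy₀, hyK⟩ := exists_zero_half_mul_reproducingKernel_le hint
    horth hrec hG.le hgap (Or.inr rfl) h.2
  have hle := sq_le_sq_add_of_zeros hrec hp₀ ha hx hy hx₀ hy₀ hxK hyK
  have hlt := sq_add_four_mul_lt (by positivity : 0 < G / 4) (ha (n + 1)) hδ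
  nlinarith

/-- Theorem 2: if `x₀` is an isolated point of `supp μ`, there is `d₀ > 0` so that
with `δ_n = d₀²/(d₀ + √2 a_{n+1})`, at least one of `p_n`, `p_{n+1}` has at most
one zero in `(x₀ − δ_n, x₀ + δ_n)`. -/
theorem stmt_12 (μ : Measure ℝ)
    (hmom : ∀ n : ℕ, Integrable (fun x : ℝ => |x| ^ n) μ)
    (hcpt : IsCompact (measSupport μ))
    (hinf : (measSupport μ).Infinite)
    (p : ℕ → Polynomial ℝ) (a b : ℕ → ℝ)
    (ha : ∀ k, 0 < a k)
    (hdeg : ∀ k, (p k).natDegree = k)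
    (hlead : ∀ k, 0 < (p k).leadingCoeff)
    (horth : ∀ k m, ∫ x, (p k).eval x * (p m).eval x ∂μ = if k = m then 1 else 0)
    (hrec : ∀ k x, x * (p k).eval x
      = a (k + 1) * (p (k + 1)).eval x + b (k + 1) * (p k).eval x
        + (if k = 0 then 0 else a k * (p (k - 1)).eval x))
    (x₀ : ℝ) (hx₀ : x₀ ∈ measSupport μ)
    (hiso : ∃ ε > 0, measSupport μ ∩ Metric.ball x₀ ε = {x₀}) :
    ∃ d₀ > (0 : ℝ), ∀ n : ℕ,
      ∀ δ : ℝ, δ = d₀ ^ 2 / (d₀ + Real.sqrt 2 * a (n + 1)) →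
      ({x ∈ Set.Ioo (x₀ - δ) (x₀ + δ) | (p n).eval x = 0}.Subsingleton ∨
       {x ∈ Set.Ioo (x₀ - δ) (x₀ + δ) | (p (n + 1)).eval x = 0}.Subsingleton) :=
  stmt_12_general μ hmom p a b ha hdeg hlead horth hrec x₀ hiso
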